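/- Let P = P_m + ⋯ + P_1, with P_i the degree-i homogeneous component, be a polynomial solution of the minimal surface equation on ℝⁿ with m = deg P ≥ 2. Then there exists an index i with 1 ≤ i ≤ ⌈m/3⌉ such that P_i ≠ 0. -/

import Mathlib

/-!
Suppose `P₁ = ⋯ = P_K = 0` with `K = ⌈m/3⌉`, so that `P` vanishes to order `K + 1` at the origin.
Write the equation as `ΔP = Δ_∞P - |∇P|² ΔP` with `Δ_∞P = ∑ P_i P_j P_ij`. Since `ΔP` itself
vanishes to order `K - 1`, the right-hand side vanishes to order `3K - 1 ≥ m - 1`, whereas `ΔP` has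
degree at most `m - 2`. Hence `ΔP = 0`, so `Δ_∞P = 0`, and the top-degree part of this identity is
`Δ_∞P_m = 0`. But at a maximum point `x₀` of `P_m²` on the unit sphere the gradient is radial,
`∇P_m(x₀) = m P_m(x₀) x₀`, and Euler's identity for the `P_{m,i}` then gives
`Δ_∞P_m(x₀) = m³ (m - 1) P_m(x₀)³ ≠ 0`.
-/

open MvPolynomial

namespace MvPolynomial

variable {σ R : Type*}

section Degrees

variable [CommSemiring R]

lemma degree_add_single_one (μ : σ →₀ ℕ) (i : σ) :
    (μ + Finsupp.single i 1).degree = μ.degree + 1 := by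
  rw [map_add, Finsupp.degree_single]

lemma totalDegree_pderiv_le (p : MvPolynomial σ R) (i : σ) :
    (pderiv i p).totalDegree ≤ p.totalDegree - 1 := by
  refine Finset.sup_le fun μ hμ => ?_
  have hcoeff : coeff (μ + Finsupp.single i 1) p ≠ 0 := by
    intro h
    rw [mem_support_iff, coeff_pderiv, h, zero_mul] at hμ
    exact hμ rfl
  have : (μ + Finsupp.single i 1).degree ≤ p.totalDegree :=
    le_totalDegree (mem_support_iff.2 hcoeff)
  rw [degree_add_single_one] at this
  change μ.degree ≤ _
  omega

lemma homogeneousComponent_pderiv (p : MvPolynomial σ R) (i : σ) (k : ℕ) :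
    homogeneousComponent k (pderiv i p) = pderiv i (homogeneousComponent (k + 1) p) := by
  ext μ
  simp only [coeff_homogeneousComponent, coeff_pderiv, degree_add_single_one, add_left_inj]
  split_ifs <;> simp

lemma homogeneousComponent_totalDegree_ne_zero {p : MvPolynomial σ R} (hp : p ≠ 0) :
    homogeneousComponent p.totalDegree p ≠ 0 := by
  obtain ⟨μ, hμ, hdeg⟩ : ∃ μ ∈ p.support, p.totalDegree = μ.degree :=
    Finset.exists_mem_eq_sup p.support (support_nonempty.2 hp) _
  intro h
  have := congrArg (coeff μ) h
  rw [coeff_homogeneousComponent, if_pos hdeg.symm, coeff_zero] at this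
  exact mem_support_iff.1 hμ this

lemma homogeneousComponent_mul_of_totalDegree_le {p q : MvPolynomial σ R} {a b : ℕ}
    (hp : p.totalDegree ≤ a) (hq : q.totalDegree ≤ b) :
    homogeneousComponent (a + b) (p * q) = homogeneousComponent a p * homogeneousComponent b q := by
  classical
  ext μ
  rw [coeff_homogeneousComponent]
  split_ifs with hμ
  · rw [coeff_mul, coeff_mul]
    refine Finset.sum_congr rfl fun ⟨α, β⟩ hαβ => ?_
    rw [Finset.HasAntidiagonal.mem_antidiagonal] at hαβ
    have hsum : α.degree + β.degree = a + b := by rw [← map_add, hαβ, hμ]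
    simp only [coeff_homogeneousComponent]
    rcases lt_trichotomy α.degree a with h | h | h
    · rw [coeff_eq_zero_of_totalDegree_lt (d := β) (by rw [← Finsupp.degree_apply]; omega)]
      simp
    · rw [if_pos h, if_pos (by omega)]
    · rw [coeff_eq_zero_of_totalDegree_lt (d := α) (by rw [← Finsupp.degree_apply]; omega)]
      simp
  · exact (((homogeneousComponent_isHomogeneous a p).mul
      (homogeneousComponent_isHomogeneous b q)).coeff_eq_zero hμ).symm

lemma IsHomogeneous.eval_smul [Fintype σ] {p : MvPolynomial σ R} {k : ℕ}
    (hp : p.IsHomogeneous k) (t : R) (x : σ → R) : eval (t • x) p = t ^ k * eval x p := by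
  rw [eval_eq', eval_eq', Finset.mul_sum]
  refine Finset.sum_congr rfl fun μ hμ => ?_
  have hdeg : ∑ i, μ i = k := by
    rw [← Finsupp.degree_eq_sum, Finsupp.degree_eq_weight_one]
    exact hp (mem_support_iff.1 hμ)
  simp only [Pi.smul_apply, smul_eq_mul, mul_pow, Finset.prod_mul_distrib,
    Finset.prod_pow_eq_pow_sum, hdeg]
  ring

end Degrees

section Order

variable [CommSemiring R]

def VanishesToOrder (c : ℕ) (p : MvPolynomial σ R) : Prop :=
  ∀ μ : σ →₀ ℕ, μ.degree < c → coeff μ p = 0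

namespace VanishesToOrder

variable {c c' : ℕ} {p q : MvPolynomial σ R}

lemma sum {ι : Type*} (s : Finset ι) {f : ι → MvPolynomial σ R}
    (hf : ∀ i ∈ s, VanishesToOrder c (f i)) : VanishesToOrder c (∑ i ∈ s, f i) :=
  fun μ hμ => by rw [coeff_sum]; exact Finset.sum_eq_zero fun i hi => hf i hi μ hμ

lemma mul (hp : VanishesToOrder c p) (hq : VanishesToOrder c' q) :
    VanishesToOrder (c + c') (p * q) := by
  classical
  intro μ hμ
  rw [coeff_mul]
  refine Finset.sum_eq_zero fun ⟨α, β⟩ hαβ => ?_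
  rw [Finset.HasAntidiagonal.mem_antidiagonal] at hαβ
  have hsum : α.degree + β.degree = μ.degree := by rw [← map_add, hαβ]
  rcases lt_or_ge α.degree c with h | h
  · rw [hp α h, zero_mul]
  · rw [hq β (by omega), mul_zero]

lemma pderiv (hp : VanishesToOrder c p) (i : σ) : VanishesToOrder (c - 1) (pderiv i p) :=
  fun μ hμ => by rw [coeff_pderiv, hp _ (by rw [degree_add_single_one]; omega), zero_mul]

lemma eq_zero_of_totalDegree_lt (hp : VanishesToOrder c p) (hdeg : p.totalDegree < c) :
    p = 0 := by
  ext μ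
  rw [coeff_zero]
  by_cases hμ : μ.degree < c
  · exact hp μ hμ
  · exact coeff_eq_zero_of_totalDegree_lt (by rw [← Finsupp.degree_apply]; omega)

end VanishesToOrder

lemma vanishesToOrder_of_homogeneousComponent_eq_zero {c : ℕ} {p : MvPolynomial σ R}
    (hp : ∀ j < c, homogeneousComponent j p = 0) : VanishesToOrder c p := fun μ hμ => by
  rw [← coeff_zero μ, ← hp _ hμ, coeff_homogeneousComponent, if_pos rfl]

end Order

section Laplacian

variable [CommRing R]

lemma VanishesToOrder.sub {c : ℕ} {p q : MvPolynomial σ R}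
    (hp : VanishesToOrder c p) (hq : VanishesToOrder c q) : VanishesToOrder c (p - q) :=
  fun μ hμ => by rw [coeff_sub, hp μ hμ, hq μ hμ, sub_zero]

variable [Fintype σ]

noncomputable def laplacian (p : MvPolynomial σ R) : MvPolynomial σ R :=
  ∑ i, pderiv i (pderiv i p)

noncomputable def infinityLaplacian (p : MvPolynomial σ R) : MvPolynomial σ R :=
  ∑ i, ∑ j, pderiv i p * pderiv j p * pderiv j (pderiv i p)

lemma totalDegree_laplacian_le (p : MvPolynomial σ R) :
    (laplacian p).totalDegree ≤ p.totalDegree - 2 := by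
  refine (totalDegree_finsetSum _ _).trans (Finset.sup_le fun i _ => ?_)
  have := totalDegree_pderiv_le p i
  have := totalDegree_pderiv_le (pderiv i p) i
  omega

lemma infinityLaplacian_eq_zero_of_vanishesToOrder {P : MvPolynomial σ R} {K : ℕ}
    (hMSE : (1 + ∑ i, pderiv i P ^ 2) * laplacian P - infinityLaplacian P = 0)
    (hP : VanishesToOrder (K + 1) P) (hK : 1 ≤ K) (hdeg : P.totalDegree ≤ 3 * K) :
    infinityLaplacian P = 0 := by
  have h₁ (i : σ) : VanishesToOrder K (pderiv i P) := hP.pderiv i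
  have h₂ (i j : σ) : VanishesToOrder (K - 1) (pderiv j (pderiv i P)) := (h₁ i).pderiv j
  have hΔ : VanishesToOrder (K - 1) (laplacian P) := .sum _ fun i _ => h₂ i i
  have hΔ_eq : laplacian P = infinityLaplacian P - (∑ i, pderiv i P ^ 2) * laplacian P := by
    linear_combination hMSE
  have hΔ' : VanishesToOrder (K + K + (K - 1)) (laplacian P) := by
    rw [hΔ_eq]
    refine .sub (.sum _ fun i _ => .sum _ fun j _ => ((h₁ i).mul (h₁ j)).mul (h₂ i j))
      (.mul (.sum _ fun i _ => ?_) hΔ)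
    exact sq (pderiv i P) ▸ (h₁ i).mul (h₁ i)
  have hΔ0 : laplacian P = 0 :=
    hΔ'.eq_zero_of_totalDegree_lt ((totalDegree_laplacian_le P).trans_lt (by omega))
  linear_combination -hMSE + (1 + ∑ i, pderiv i P ^ 2) * hΔ0

lemma homogeneousComponent_infinityLaplacian {P : MvPolynomial σ R} {k : ℕ}
    (hdeg : P.totalDegree ≤ k + 2) :
    homogeneousComponent (k + 1 + (k + 1) + k) (infinityLaplacian P) =
      infinityLaplacian (homogeneousComponent (k + 2) P) := by
  simp only [infinityLaplacian, map_sum]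
  refine Finset.sum_congr rfl fun i _ => Finset.sum_congr rfl fun j _ => ?_
  have h₁ (i : σ) : (pderiv i P).totalDegree ≤ k + 1 :=
    (totalDegree_pderiv_le P i).trans (by omega)
  have h₂ : (pderiv j (pderiv i P)).totalDegree ≤ k :=
    (totalDegree_pderiv_le _ j).trans (by have := h₁ i; omega)
  rw [homogeneousComponent_mul_of_totalDegree_le
      ((totalDegree_mul _ _).trans (add_le_add (h₁ i) (h₁ j))) h₂,
    homogeneousComponent_mul_of_totalDegree_le (h₁ i) (h₁ j), homogeneousComponent_pderiv,
    homogeneousComponent_pderiv, homogeneousComponent_pderiv, homogeneousComponent_pderiv]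

end Laplacian

section Real

lemma hasDerivAt_eval_update [DecidableEq σ] (p : MvPolynomial σ ℝ) (x : σ → ℝ) (i : σ)
    (t : ℝ) :
    HasDerivAt (fun s => eval (Function.update x i s) p)
      (eval (Function.update x i t) (pderiv i p)) t := by
  induction p using MvPolynomial.induction_on with
  | C a => simpa using hasDerivAt_const t a
  | add p q hp hq =>
    simp only [map_add]
    exact hp.add hq
  | mul_X p j hp =>
    have hj := hasDerivAt_pi.1 (hasDerivAt_update x i t) j
    have hX : eval (Function.update x i t) (pderiv i (X j)) =
        Pi.single (M := fun _ => ℝ) i 1 j := by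
      by_cases hji : j = i
      · subst hji
        simp
      · simp [pderiv_X_of_ne hji, hji]
    simp only [map_mul, eval_X, pderiv_mul, map_add, hX]
    exact hp.mul hj

lemma eval_pderiv_eq_zero_of_forall_eval_le {p : MvPolynomial σ ℝ} {x₀ : σ → ℝ}
    (hmax : ∀ x, eval x p ≤ eval x₀ p) (i : σ) : eval x₀ (pderiv i p) = 0 := by
  classical
  have hderiv := hasDerivAt_eval_update p x₀ i (x₀ i)
  rw [Function.update_eq_self] at hderiv
  refine IsLocalMax.hasDerivAt_eq_zero (Filter.Eventually.of_forall fun s => ?_) hderiv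
  simpa only [Function.update_eq_self] using hmax (Function.update x₀ i s)

lemma exists_forall_sq_eval_le [Fintype σ] {Q : MvPolynomial σ ℝ} {k : ℕ}
    (hQ : Q.IsHomogeneous k) (hk : k ≠ 0) (hQ0 : Q ≠ 0) :
    ∃ x₀ : σ → ℝ, ∑ i, x₀ i ^ 2 = 1 ∧ eval x₀ Q ≠ 0 ∧
      ∀ x : σ → ℝ, eval x Q ^ 2 ≤ eval x₀ Q ^ 2 * (∑ i, x i ^ 2) ^ k := by
  let f : EuclideanSpace ℝ σ → ℝ := fun v => eval v.ofLp Q ^ 2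
  have hf : Continuous f := ((continuous_eval Q).comp (PiLp.continuous_ofLp 2 _)).pow 2
  obtain ⟨z, hz⟩ : ∃ z, eval z Q ≠ 0 := by
    by_contra! h
    exact hQ0 (MvPolynomial.funext fun x => by simp [h x])
  have heval_zero : constantCoeff Q = 0 := by
    simpa [zero_pow hk] using hQ.eval_smul 0 z
  have hz0 : WithLp.toLp 2 z ≠ 0 := fun h => hz <| by
    rw [show z = 0 by simpa using congrArg WithLp.ofLp h, eval_zero, heval_zero]
  obtain ⟨v₀, hv₀, hmax⟩ := (isCompact_sphere (0 : EuclideanSpace ℝ σ) 1).exists_isMaxOn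
    ⟨_, mem_sphere_zero_iff_norm.2 (norm_smul_inv_norm (𝕜 := ℝ) hz0)⟩ hf.continuousOn
  have hbound (v : EuclideanSpace ℝ σ) : f v ≤ f v₀ * (‖v‖ ^ 2) ^ k := by
    rcases eq_or_ne v 0 with rfl | hv
    · simp [f, heval_zero, zero_pow hk]
    have hscale : f v = (‖v‖ ^ 2) ^ k * f (‖v‖⁻¹ • v) := by
      have hnorm : (‖v‖ ^ 2) ^ k * (‖v‖⁻¹ ^ k) ^ 2 = 1 := by
        rw [← pow_mul, mul_comm 2 k, pow_mul, ← mul_pow, ← mul_pow,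
          mul_inv_cancel₀ (norm_ne_zero_iff.2 hv), one_pow, one_pow]
      simp only [f, WithLp.ofLp_smul, hQ.eval_smul]
      linear_combination -(eval v.ofLp Q ^ 2) * hnorm
    rw [hscale, mul_comm]
    exact mul_le_mul_of_nonneg_right
      (hmax (mem_sphere_zero_iff_norm.2 (norm_smul_inv_norm (𝕜 := ℝ) hv))) (by positivity)
  refine ⟨v₀.ofLp, ?_, fun h => hz ?_, fun x => ?_⟩
  · rw [← EuclideanSpace.real_norm_sq_eq, mem_sphere_zero_iff_norm.1 hv₀, one_pow]
  · have := hbound (WithLp.toLp 2 z)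
    simp only [f, h] at this
    nlinarith [sq_nonneg (eval z Q)]
  · simpa [f, EuclideanSpace.real_norm_sq_eq] using hbound (WithLp.toLp 2 x)

lemma eval_pderiv_eq_of_forall_sq_eval_le [Fintype σ] {Q : MvPolynomial σ ℝ} {k : ℕ}
    {x₀ : σ → ℝ} (hx₀ : ∑ i, x₀ i ^ 2 = 1) (hQx₀ : eval x₀ Q ≠ 0)
    (hmax : ∀ x, eval x Q ^ 2 ≤ eval x₀ Q ^ 2 * (∑ i, x i ^ 2) ^ k) (i : σ) :
    eval x₀ (pderiv i Q) = k * eval x₀ Q * x₀ i := by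
  classical
  set c := eval x₀ Q
  set G : MvPolynomial σ ℝ := Q ^ 2 - C (c ^ 2) * (∑ j, X j ^ 2) ^ k
  have hG (x : σ → ℝ) : eval x G = eval x Q ^ 2 - c ^ 2 * (∑ j, x j ^ 2) ^ k := by simp [G]
  have hcrit : eval x₀ (pderiv i G) = 0 :=
    eval_pderiv_eq_zero_of_forall_eval_le
      (fun x => by rw [hG, hG, hx₀, one_pow]; linarith [hmax x]) i
  have hT : pderiv i (∑ j, X j ^ 2 : MvPolynomial σ ℝ) = 2 * X i := by
    simp [pderiv_X, Pi.single_apply]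
  rw [map_sub, pderiv_pow, pderiv_C_mul, pderiv_pow, hT] at hcrit
  simp only [Nat.cast_ofNat, Nat.add_one_sub_one, pow_one, map_sub, map_mul, eval_ofNat,
    map_pow, eval_C, map_natCast, map_sum, eval_X, hx₀, one_pow, mul_one] at hcrit
  apply mul_left_cancel₀ (mul_ne_zero two_ne_zero hQx₀)
  linear_combination hcrit

lemma infinityLaplacian_ne_zero [Fintype σ] {Q : MvPolynomial σ ℝ} {k : ℕ}
    (hQ : Q.IsHomogeneous (k + 2)) (hQ0 : Q ≠ 0) : infinityLaplacian Q ≠ 0 := by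
  obtain ⟨x₀, hx₀, hQx₀, hmax⟩ := exists_forall_sq_eval_le hQ (by omega) hQ0
  set c := eval x₀ Q
  have hgrad (i : σ) : eval x₀ (pderiv i Q) = (k + 2) * c * x₀ i := by
    simpa using eval_pderiv_eq_of_forall_sq_eval_le hx₀ hQx₀ hmax i
  have heuler (i : σ) :
      ∑ j, x₀ j * eval x₀ (pderiv j (pderiv i Q)) = (k + 1) * eval x₀ (pderiv i Q) := by
    simpa using congrArg (eval x₀) (hQ.pderiv (i := i)).sum_X_mul_pderiv
  have heval : eval x₀ (infinityLaplacian Q) = ((k + 2) * c) ^ 3 * (k + 1) :=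
    calc eval x₀ (infinityLaplacian Q)
        = ∑ i, ((k + 2) * c) ^ 2 * x₀ i * ∑ j, x₀ j * eval x₀ (pderiv j (pderiv i Q)) := by
          simp only [infinityLaplacian, map_sum, map_mul, hgrad, Finset.mul_sum]
          refine Finset.sum_congr rfl fun i _ => Finset.sum_congr rfl fun j _ => ?_
          ring
      _ = ((k + 2) * c) ^ 3 * (k + 1) * ∑ i, x₀ i ^ 2 := by
          simp only [heuler, hgrad, Finset.mul_sum]
          refine Finset.sum_congr rfl fun i _ => ?_
          ring
      _ = ((k + 2) * c) ^ 3 * (k + 1) := by rw [hx₀, mul_one]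
  intro h
  rw [h, map_zero] at heval
  exact mul_ne_zero (pow_ne_zero 3 (mul_ne_zero (by positivity) hQx₀)) (by positivity)
    heval.symm

end Real
end MvPolynomial

/-- A polynomial solution `P = P_m + ⋯ + P_1` (no constant term, degree `m ≥ 2`) of the
minimal surface equation must contain a nonzero homogeneous component of some degree `i`
with `1 ≤ i ≤ ⌈m/3⌉`.  (Note: `⌈m/3⌉ = (m + 2) / 3` in natural-number division.) -/
theorem stmt5 {n : ℕ} (m : ℕ) (hm : 2 ≤ m) (P : MvPolynomial (Fin n) ℝ)
    (hdeg : P.totalDegree = m) (hconst : constantCoeff P = 0)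
    (hMSE : (1 + ∑ i : Fin n, (pderiv i P) ^ 2) * (∑ i : Fin n, pderiv i (pderiv i P))
      - ∑ i : Fin n, ∑ j : Fin n,
          pderiv i P * pderiv j P * pderiv j (pderiv i P) = 0) :
    ∃ i : ℕ, 1 ≤ i ∧ i ≤ (m + 2) / 3 ∧ homogeneousComponent i P ≠ 0 := by
  by_contra! hlow
  have hP : VanishesToOrder ((m + 2) / 3 + 1) P :=
    vanishesToOrder_of_homogeneousComponent_eq_zero fun j hj => by
      rcases j with _ | j
      · rw [homogeneousComponent_zero, ← constantCoeff_eq, hconst, map_zero]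
      · exact hlow (j + 1) (by omega) (by omega)
  have hinf := infinityLaplacian_eq_zero_of_vanishesToOrder hMSE hP (by omega) (by omega)
  obtain ⟨k, rfl⟩ : ∃ k, m = k + 2 := ⟨m - 2, by omega⟩
  have htop := homogeneousComponent_infinityLaplacian (k := k) hdeg.le
  rw [hinf, map_zero] at htop
  have hP0 : P ≠ 0 := by rintro rfl; simp at hdeg
  have hQ0 := homogeneousComponent_totalDegree_ne_zero hP0
  rw [hdeg] at hQ0
  exact infinityLaplacian_ne_zero (homogeneousComponent_isHomogeneous _ _) hQ0 htop.symm
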